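/- arXiv:1205.4603 — 2 statements merged into one kernel-verified Lean document; each statement's English description precedes it below -/
import Mathlib

section
/- Let p ≥ 3 be a prime and let 3 ≤ r < s be integers with (r-1) ∤ (s-1), and let g be the least positive residue of s-1 modulo r-1. Suppose d ∈ Biv*(s,r) satisfies h_p(δ^{-1}(d)) = min h_p and 2g ≥ r-1. Then η_max(d) = 1; that is, every maximal block of consecutive entries [q] in d is a singleton, so d contains exactly r-g-1 entries [q], no two of them adjacent, and d contains exactly w = r-g-2 maximal [q+1]-blocks, whose average length is q_2 = g/(r-g-2). -/
/-!
Write `d` as a word in the letters `v = [q]` and `v + 1`. Turning an ascent `v, v+1` of `d` into a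
descent raises one coordinate of `δ⁻¹(d)` by one, and since `p ≥ 3` this lowers `h_p` exactly when
the letters left of the ascent, read outward, are lexicographically smaller than the letters to its
right: at the first difference, the extra factor `p⁻¹` outweighs the whole geometric tail. So at a
minimiser every ascent is lexicographically balanced, and by the symmetry
`a ↦ (s-1) - a(r-1-·)` of `h_p` so is every ascent of the reversed word.

A word balanced in both directions cannot contain both a factor `v v` and a factor
`(v+1)(v+1)`: between a closest such pair the word alternates, and balance at the ascent next to
`(v+1)(v+1)` produces a closer pair on its other side. Since `d` starts and ends with `v` and has
`g ≥ (r-1)/2` letters `v + 1`, it contains `(v+1)(v+1)`, hence no `v v`, and the counts follow.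
-/

/-- `A(s,r)`: admissible exponent tuples, viewed as functions `ℕ → ℤ` whose relevant
entries are indices `0,…,r-1`: strictly increasing with `a 0 = 0` and `a (r-1) = s-1`. -/
def Admissible (s r : ℕ) (a : ℕ → ℤ) : Prop :=
  a 0 = 0 ∧ a (r - 1) = (s : ℤ) - 1 ∧ ∀ i, i + 1 < r → a i < a (i + 1)

/-- `h_p(x) = Σ_{k<i≤r} p^{-(x_i - x_k)}` (indices `0,…,r-1`). -/
noncomputable def hp (p r : ℕ) (a : ℕ → ℤ) : ℝ :=
  ∑ k ∈ Finset.range r, ∑ i ∈ Finset.range r,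
    if k < i then (p : ℝ) ^ (a k - a i) else 0

/-- `δ⁻¹(d) = (0, d₁, d₁+d₂, …)`: the exponent tuple with delta vector `d`. -/
def deltaInv (d : ℕ → ℤ) (i : ℕ) : ℤ := ∑ j ∈ Finset.range i, d j

/-- `IsMaxRun n d v i l`: within the vector `(d 0, …, d (n-1))`, the entries
`d i, …, d (i+l-1)` form a maximal block of consecutive entries equal to `v`
(of length `l ≥ 1`). -/
def IsMaxRun (n : ℕ) (d : ℕ → ℤ) (v : ℤ) (i l : ℕ) : Prop :=
  0 < l ∧ i + l ≤ n ∧ (∀ k < l, d (i + k) = v) ∧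
    (0 < i → d (i - 1) ≠ v) ∧ (i + l < n → d (i + l) ≠ v)

open Finset

section StepWeight

variable {P : ℝ}

noncomputable def stepWeight (P : ℝ) (x : ℕ → ℤ) (m : ℕ) : ℝ :=
  ∑ s ∈ range (m + 1), P ^ (-deltaInv x s)

def IsSentinelPadded (x : ℕ → ℤ) (c : ℤ) (m : ℕ) : Prop :=
  ∀ j, (j < m → x j < c) ∧ (m ≤ j → x j = c)

lemma deltaInv_succ' (x : ℕ → ℤ) (s : ℕ) :
    deltaInv x (s + 1) = x 0 + deltaInv (fun j => x (j + 1)) s := by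
  simp only [deltaInv, sum_range_succ', add_comm]

lemma stepWeight_zero (x : ℕ → ℤ) : stepWeight P x 0 = 1 := by
  simp [stepWeight, deltaInv]

lemma stepWeight_succ (hP : P ≠ 0) (x : ℕ → ℤ) (m : ℕ) :
    stepWeight P x (m + 1) = 1 + P ^ (-x 0) * stepWeight P (fun j => x (j + 1)) m := by
  rw [stepWeight, sum_range_succ', stepWeight, mul_sum]
  simp only [deltaInv_succ', neg_add, zpow_add₀ hP]
  simp [deltaInv, add_comm]

lemma one_le_stepWeight (hP : 0 < P) (x : ℕ → ℤ) (m : ℕ) : 1 ≤ stepWeight P x m := by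
  calc (1 : ℝ) = P ^ (-deltaInv x 0) := by simp [deltaInv]
    _ ≤ stepWeight P x m := single_le_sum (f := fun s => P ^ (-deltaInv x s))
        (fun s _ => (zpow_pos hP _).le) (mem_range.mpr (Nat.succ_pos m))

lemma stepWeight_le_three_halves (hP : 3 ≤ P) {x : ℕ → ℤ} (hx : ∀ j, 1 ≤ x j) (m : ℕ) :
    stepWeight P x m ≤ 3 / 2 := by
  induction m generalizing x with
  | zero => rw [stepWeight_zero]; norm_num
  | succ m ih =>
    rw [stepWeight_succ (by positivity)]
    have hpow : P ^ (-x 0) ≤ 1 / 3 := by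
      calc P ^ (-x 0) ≤ P ^ (-1 : ℤ) := zpow_le_zpow_right₀ (by linarith) (by linarith [hx 0])
        _ ≤ 1 / 3 := by rw [zpow_neg_one, one_div]; exact inv_anti₀ (by norm_num) hP
    nlinarith [ih fun j => hx (j + 1), zpow_pos (by linarith : (0 : ℝ) < P) (-x 0)]

lemma IsSentinelPadded.le {x : ℕ → ℤ} {c : ℤ} {m : ℕ} (h : IsSentinelPadded x c m) (j : ℕ) :
    x j ≤ c := by
  rcases Nat.lt_or_ge j m with hj | hj
  · exact ((h j).1 hj).le
  · exact ((h j).2 hj).le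

lemma IsSentinelPadded.tail {x : ℕ → ℤ} {c : ℤ} {m : ℕ} (h : IsSentinelPadded x c (m + 1)) :
    IsSentinelPadded (fun j => x (j + 1)) c m :=
  fun j => ⟨fun hj => (h (j + 1)).1 (by omega), fun hj => (h (j + 1)).2 (by omega)⟩

/-- Once the steps first differ, the factor `P⁻¹ ≤ 1/3` of the larger step outweighs the whole
remaining tail, which is at most `3/2`. -/
lemma stepWeight_lt_of_toLex_lt (hP : 3 ≤ P) {x y : ℕ → ℤ} {c : ℤ} {m n : ℕ}
    (hx : IsSentinelPadded x c m) (hy : IsSentinelPadded y c n) (hy1 : ∀ j, 1 ≤ y j)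
    (hlex : toLex x < toLex y) : stepWeight P y n < stepWeight P x m := by
  have hP0 : (0 : ℝ) < P := by linarith
  obtain ⟨t, hpre, hlt⟩ := hlex
  change ∀ j < t, x j = y j at hpre
  change x t < y t at hlt
  induction t generalizing x y m n with
  | zero =>
    rcases m with _ | m
    · linarith [(hx 0).2 le_rfl, hy.le 0]
    have hyx : stepWeight P y n ≤ 1 + P ^ (-x 0) / 2 := by
      rcases n with _ | n
      · rw [stepWeight_zero]; linarith [zpow_pos hP0 (-x 0)]
      rw [stepWeight_succ hP0.ne']
      have hpow : P ^ (-y 0) ≤ P ^ (-x 0) / 3 := by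
        calc P ^ (-y 0) ≤ P ^ (-x 0 + -1) :=
              zpow_le_zpow_right₀ (by linarith) (by omega)
          _ = P ^ (-x 0) * P⁻¹ := by rw [zpow_add₀ hP0.ne', zpow_neg_one]
          _ ≤ P ^ (-x 0) / 3 := by
            rw [div_eq_mul_inv]
            exact mul_le_mul_of_nonneg_left (inv_anti₀ (by norm_num) hP) (zpow_pos hP0 _).le
      nlinarith [stepWeight_le_three_halves hP (fun j => hy1 (j + 1)) n, zpow_pos hP0 (-y 0)]
    rw [stepWeight_succ hP0.ne']
    nlinarith [one_le_stepWeight hP0 (fun j => x (j + 1)) m, zpow_pos hP0 (-x 0)]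
  | succ t ih =>
    have h0 : x 0 = y 0 := hpre 0 (Nat.succ_pos t)
    rcases m with _ | m
    · rcases n with _ | n
      · linarith [(hx (t + 1)).2 (Nat.zero_le _), (hy (t + 1)).2 (Nat.zero_le _)]
      · linarith [(hx 0).2 le_rfl, (hy 0).1 (Nat.succ_pos n)]
    rcases n with _ | n
    · linarith [(hx 0).1 (Nat.succ_pos m), (hy 0).2 le_rfl]
    rw [stepWeight_succ hP0.ne', stepWeight_succ hP0.ne', h0]
    have := ih hx.tail hy.tail (fun j => hy1 (j + 1)) (fun j hj => hpre (j + 1) (by omega)) hlt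
    have := zpow_pos hP0 (-y 0)
    gcongr

end StepWeight

section Hp

lemma hp_congr (p r : ℕ) {a a' : ℕ → ℤ} (h : ∀ i < r, a i = a' i) : hp p r a = hp p r a' := by
  unfold hp
  refine sum_congr rfl fun k hk => sum_congr rfl fun i hi => ?_
  rw [h k (mem_range.mp hk), h i (mem_range.mp hi)]

lemma hp_reflect (p r : ℕ) (a : ℕ → ℤ) (C : ℤ) :
    hp p r (fun i => C - a (r - 1 - i)) = hp p r a := by
  unfold hp
  simp only [sub_sub_sub_cancel_left]
  rw [sum_comm, ← sum_range_reflect]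
  refine sum_congr rfl fun i hi => ?_
  rw [← sum_range_reflect]
  refine sum_congr rfl fun k hk => ?_
  simp only [mem_range] at hi hk
  rw [Nat.sub_sub_self (by omega : i ≤ r - 1), Nat.sub_sub_self (by omega : k ≤ r - 1)]
  exact if_congr (by omega) rfl rfl

lemma hp_add_single_sub (p r : ℕ) (a : ℕ → ℤ) {m : ℕ} (hm : m < r) (e : ℤ) :
    hp p r (a + Pi.single m e) - hp p r a =
      ∑ i ∈ Ico (m + 1) r, ((p : ℝ) ^ (a m + e - a i) - (p : ℝ) ^ (a m - a i)) +
      ∑ k ∈ range m, ((p : ℝ) ^ (a k - (a m + e)) - (p : ℝ) ^ (a k - a m)) := by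
  set a' : ℕ → ℤ := a + Pi.single m e with ha'
  set G : ℕ → ℝ := fun i => (p : ℝ) ^ (a m + e - a i) - (p : ℝ) ^ (a m - a i)
  set H : ℕ → ℝ := fun k => (p : ℝ) ^ (a k - (a m + e)) - (p : ℝ) ^ (a k - a m)
  have hterm : ∀ k i,
      ((if k < i then (p : ℝ) ^ (a' k - a' i) else 0) -
        if k < i then (p : ℝ) ^ (a k - a i) else 0) =
      (if k = m then (if m < i then G i else 0) else 0) +
        (if i = m then (if k < m then H k else 0) else 0) := by
    intro k i
    simp only [ha', Pi.add_apply, Pi.single_apply, G, H]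
    split_ifs <;> first | omega | simp_all
  unfold hp
  simp only [← sum_sub_distrib, hterm]
  simp only [sum_add_distrib, sum_ite_irrel, sum_const_zero, sum_ite_eq', mem_range, hm, if_true,
    ← sum_filter]
  congr 1 <;> congr 1 <;> ext x <;> simp only [mem_filter, mem_range, mem_Ico] <;> omega

lemma hp_add_single_one_lt {p : ℕ} (hp1 : 1 < p) (r : ℕ) (a : ℕ → ℤ) {m : ℕ} (hm : m < r)
    (h : (p : ℝ) * ∑ i ∈ Ico (m + 1) r, (p : ℝ) ^ (a m - a i) <
      ∑ k ∈ range m, (p : ℝ) ^ (a k - a m)) :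
    hp p r (a + Pi.single m 1) < hp p r a := by
  have hP : (1 : ℝ) < p := by exact_mod_cast hp1
  have hP0 : (p : ℝ) ≠ 0 := by positivity
  have hdiff := hp_add_single_sub p r a hm 1
  have hup : ∀ i, (p : ℝ) ^ (a m + 1 - a i) - (p : ℝ) ^ (a m - a i) =
      ((p : ℝ) - 1) * (p : ℝ) ^ (a m - a i) := fun i => by
    rw [show a m + 1 - a i = a m - a i + 1 by ring, zpow_add_one₀ hP0]; ring
  have hdown : ∀ k, (p : ℝ) ^ (a k - (a m + 1)) - (p : ℝ) ^ (a k - a m) =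
      -(((p : ℝ) - 1) / p) * (p : ℝ) ^ (a k - a m) := fun k => by
    rw [show a k - (a m + 1) = a k - a m - 1 by ring, zpow_sub_one₀ hP0]; field_simp; ring
  simp only [hup, hdown, ← mul_sum] at hdiff
  have hpos : 0 < ((p : ℝ) - 1) / p := by positivity
  have := mul_lt_mul_of_pos_left h hpos
  rw [← mul_assoc, div_mul_cancel₀ _ hP0] at this
  linarith

end Hp

section Words

lemma deltaInv_zero (d : ℕ → ℤ) : deltaInv d 0 = 0 := sum_range_zero d

lemma deltaInv_succ (d : ℕ → ℤ) (i : ℕ) : deltaInv d (i + 1) = deltaInv d i + d i :=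
  sum_range_succ d i

def reflect (n : ℕ) (w : ℕ → ℤ) : ℕ → ℤ := fun j => w (n - 1 - j)

lemma deltaInv_reflect (d : ℕ → ℤ) {n i : ℕ} (hi : i ≤ n) :
    deltaInv (reflect n d) i = deltaInv d n - deltaInv d (n - i) := by
  induction i with
  | zero => simp [deltaInv_zero]
  | succ i ih =>
    have hsplit := deltaInv_succ d (n - (i + 1))
    rw [show n - (i + 1) + 1 = n - i by omega] at hsplit
    rw [deltaInv_succ, ih (by omega), reflect, show n - 1 - i = n - (i + 1) by omega]
    linarith

def readLeft (w : ℕ → ℤ) (c : ℤ) (u : ℕ) : ℕ → ℤ := fun t => if t < u then w (u - 1 - t) else c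

def readRight (n : ℕ) (w : ℕ → ℤ) (c : ℤ) (u : ℕ) : ℕ → ℤ :=
  fun t => if u + 2 + t < n then w (u + 2 + t) else c

lemma isSentinelPadded_readLeft {w : ℕ → ℤ} {c : ℤ} {u : ℕ} (h : ∀ j < u, w j < c) :
    IsSentinelPadded (readLeft w c u) c u := fun j =>
  ⟨fun hj => by simpa only [readLeft, if_pos hj] using h _ (by omega),
    fun hj => by simp only [readLeft, if_neg (not_lt.mpr hj)]⟩

lemma isSentinelPadded_readRight {n : ℕ} {w : ℕ → ℤ} {c : ℤ} {u : ℕ} (h : ∀ j < n, w j < c) :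
    IsSentinelPadded (readRight n w c u) c (n - (u + 2)) := fun j =>
  ⟨fun hj => by simpa only [readRight, if_pos (by omega : u + 2 + j < n)] using h _ (by omega),
    fun hj => by simp only [readRight, if_neg (by omega : ¬ u + 2 + j < n)]⟩

lemma le_readRight {n : ℕ} {w : ℕ → ℤ} {b c : ℤ} (h : ∀ j < n, b ≤ w j) (hc : b ≤ c) (u t : ℕ) :
    b ≤ readRight n w c u t := by
  unfold readRight
  split_ifs with ht
  exacts [h _ ht, hc]

lemma deltaInv_sub_deltaInv_readLeft (d : ℕ → ℤ) (c : ℤ) {u s : ℕ} (hs : s ≤ u) :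
    deltaInv d (u + 1) - deltaInv d (u - s) = d u + deltaInv (readLeft d c u) s := by
  induction s with
  | zero => simp [deltaInv_succ, deltaInv_zero]
  | succ s ih =>
    have hstep := deltaInv_succ d (u - (s + 1))
    rw [show u - (s + 1) + 1 = u - s by omega] at hstep
    have hread : readLeft d c u s = d (u - (s + 1)) := by
      simp only [readLeft, if_pos (by omega : s < u), show u - 1 - s = u - (s + 1) by omega]
    rw [deltaInv_succ (readLeft d c u), hread]
    linarith [ih (by omega)]

lemma deltaInv_sub_deltaInv_readRight (d : ℕ → ℤ) (c : ℤ) {n u s : ℕ} (hs : u + 2 + s ≤ n) :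
    deltaInv d (u + 2 + s) - deltaInv d (u + 1) = d (u + 1) + deltaInv (readRight n d c u) s := by
  induction s with
  | zero => simp [deltaInv_succ, deltaInv_zero]
  | succ s ih =>
    rw [← add_assoc, deltaInv_succ, deltaInv_succ (readRight n d c u), readRight,
      if_pos (by omega)]
    linarith [ih (by omega)]

lemma sum_range_zpow_eq_stepWeight_readLeft {P : ℝ} (hP : P ≠ 0) (d : ℕ → ℤ) (c : ℤ) (u : ℕ) :
    ∑ k ∈ range (u + 1), P ^ (deltaInv d k - deltaInv d (u + 1)) =
      P ^ (-d u) * stepWeight P (readLeft d c u) u := by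
  rw [← sum_range_reflect, stepWeight, mul_sum]
  refine sum_congr rfl fun s hs => ?_
  rw [← zpow_add₀ hP, show u + 1 - 1 - s = u - s by omega]
  congr 1
  linarith [deltaInv_sub_deltaInv_readLeft d c (u := u) (s := s) (by simp at hs; omega)]

lemma sum_Ico_zpow_eq_stepWeight_readRight {P : ℝ} (hP : P ≠ 0) (d : ℕ → ℤ) (c : ℤ)
    {r u : ℕ} (hu : u + 2 < r) :
    ∑ i ∈ Ico (u + 2) r, P ^ (deltaInv d (u + 1) - deltaInv d i) =
      P ^ (-d (u + 1)) * stepWeight P (readRight (r - 1) d c u) (r - 1 - (u + 2)) := by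
  rw [sum_Ico_eq_sum_range, stepWeight, mul_sum, show r - 1 - (u + 2) + 1 = r - (u + 2) by omega]
  refine sum_congr rfl fun s hs => ?_
  rw [← zpow_add₀ hP]
  congr 1
  linarith [deltaInv_sub_deltaInv_readRight d c (n := r - 1) (u := u) (s := s)
    (by simp at hs; omega)]

end Words

section Minimizers

/-- Exactly the condition under which turning an ascent `v, v+1` into a descent does not lower
`h_p`. The sentinel `v + 2` exceeds every letter, so a side that runs out compares as larger. -/
def AscentsBalanced (n : ℕ) (w : ℕ → ℤ) (v : ℤ) : Prop :=
  ∀ u, u + 1 < n → w u = v → w (u + 1) = v + 1 →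
    ¬ toLex (readLeft w (v + 2) u) < toLex (readRight n w (v + 2) u)

def LexBalanced (n : ℕ) (w : ℕ → ℤ) (v : ℤ) : Prop :=
  AscentsBalanced n w v ∧ AscentsBalanced n (reflect n w) v

lemma admissible_deltaInv_add_single {s r : ℕ} {d : ℕ → ℤ} (hd : ∀ j < r - 1, 1 ≤ d j)
    (hsum : ∑ j ∈ range (r - 1), d j = (s : ℤ) - 1) {m : ℕ} (hm0 : 0 < m) (hmr : m + 1 < r)
    (hdm : 2 ≤ d m) : Admissible s r (deltaInv d + Pi.single m 1) := by
  refine ⟨?_, ?_, fun i hi => ?_⟩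
  · simp [deltaInv_zero, hm0.ne']
  · rw [Pi.add_apply, Pi.single_apply, if_neg (by omega), add_zero]
    exact hsum
  · have := hd i (by omega)
    simp only [Pi.add_apply, Pi.single_apply, deltaInv_succ]
    split_ifs <;> subst_vars <;> omega

theorem ascentsBalanced_of_isMin {p s r : ℕ} (hp3 : 3 ≤ p) {v : ℤ} (hv : 1 ≤ v) {d : ℕ → ℤ}
    (hmem : ∀ j < r - 1, d j = v ∨ d j = v + 1)
    (hsum : ∑ j ∈ range (r - 1), d j = (s : ℤ) - 1)
    (hmin : ∀ b, Admissible s r b → hp p r (deltaInv d) ≤ hp p r b) :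
    AscentsBalanced (r - 1) d v := by
  intro u hu hdu hdu1 hlex
  have hP : (3 : ℝ) ≤ p := by exact_mod_cast hp3
  have hP0 : (0 : ℝ) < p := by linarith
  have hlt : ∀ j < r - 1, d j < v + 2 := fun j hj => by rcases hmem j hj with h | h <;> omega
  have hweight := stepWeight_lt_of_toLex_lt hP
    (isSentinelPadded_readLeft fun j hj => hlt j (by omega)) (isSentinelPadded_readRight hlt)
    (le_readRight (fun j hj => by rcases hmem j hj with h | h <;> omega) (by omega) u) hlex
  have hdec : hp p r (deltaInv d + Pi.single (u + 1) 1) < hp p r (deltaInv d) := by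
    refine hp_add_single_one_lt (by omega) r _ (by omega) ?_
    rw [sum_range_zpow_eq_stepWeight_readLeft hP0.ne' d (v + 2),
      sum_Ico_zpow_eq_stepWeight_readRight hP0.ne' d (v + 2) (by omega), hdu, hdu1, ← mul_assoc,
      ← zpow_one_add₀ hP0.ne', show 1 + -(v + 1) = -v by ring]
    exact mul_lt_mul_of_pos_left hweight (zpow_pos hP0 _)
  have hadm := admissible_deltaInv_add_single (fun j hj => by rcases hmem j hj with h | h <;> omega)
    hsum (m := u + 1) (by omega) (by omega) (by omega)
  exact (hdec.trans_le (hmin _ hadm)).false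

lemma hp_deltaInv_reflect (p : ℕ) {r : ℕ} (hr : 0 < r) (d : ℕ → ℤ) :
    hp p r (deltaInv (reflect (r - 1) d)) = hp p r (deltaInv d) := by
  rw [← hp_reflect p r (deltaInv d) (deltaInv d (r - 1))]
  exact hp_congr p r fun i hi => deltaInv_reflect d (by omega)

theorem lexBalanced_of_isMin {p s r : ℕ} (hp3 : 3 ≤ p) (hr : 0 < r) {v : ℤ} (hv : 1 ≤ v)
    {d : ℕ → ℤ} (hmem : ∀ j < r - 1, d j = v ∨ d j = v + 1)
    (hsum : ∑ j ∈ range (r - 1), d j = (s : ℤ) - 1)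
    (hmin : ∀ b, Admissible s r b → hp p r (deltaInv d) ≤ hp p r b) :
    LexBalanced (r - 1) d v :=
  ⟨ascentsBalanced_of_isMin hp3 hv hmem hsum hmin,
    ascentsBalanced_of_isMin hp3 hv (fun j hj => hmem _ (by omega))
      ((sum_range_reflect d (r - 1)).trans hsum)
      (fun b hb => hp_deltaInv_reflect p hr d ▸ hmin b hb)⟩

end Minimizers

section Combinatorics

variable {n : ℕ} {w : ℕ → ℤ} {v : ℤ}

def AdjPair (w : ℕ → ℤ) (c : ℤ) (m : ℕ) : Prop := w m = c ∧ w (m + 1) = c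

lemma AdjPair.reflect {c : ℤ} {m : ℕ} (h : AdjPair w c m) (hm : m + 1 < n) :
    AdjPair (reflect n w) c (n - 2 - m) := by
  simp only [AdjPair, _root_.reflect, show n - 1 - (n - 2 - m) = m + 1 by omega,
    show n - 1 - (n - 2 - m + 1) = m by omega]
  exact h.symm

lemma AscentsBalanced.congr {w' : ℕ → ℤ} (h : AscentsBalanced n w v) (hww' : ∀ j < n, w j = w' j) :
    AscentsBalanced n w' v := by
  intro u hu h0 h1
  have hL : readLeft w' (v + 2) u = readLeft w (v + 2) u := funext fun t => by
    simp only [readLeft]; split_ifs <;> simp [hww' _ (by omega : u - 1 - t < n)]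
  have hR : readRight n w' (v + 2) u = readRight n w (v + 2) u := funext fun t => by
    simp only [readRight]; split_ifs with ht <;> [exact (hww' _ ht).symm; rfl]
  rw [hL, hR]
  exact h u hu (by rw [hww' u (by omega), h0]) (by rw [hww' _ hu, h1])

lemma LexBalanced.reflect (h : LexBalanced n w v) : LexBalanced n (reflect n w) v :=
  ⟨h.2, h.1.congr fun j hj => by simp only [_root_.reflect]; congr 1; omega⟩

lemma eq_ite_of_alternating {i j : ℕ} (hw : ∀ k < n, w k = v ∨ w k = v + 1) (hj : j < n)
    (h1 : w (i + 1) = v) (halt : ∀ m, i < m → m < j → w (m + 1) ≠ w m) :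
    ∀ t, i + 1 + t ≤ j → w (i + 1 + t) = if t % 2 = 0 then v else v + 1 := by
  intro t
  induction t with
  | zero => simpa using fun _ => h1
  | succ t ih =>
    intro ht
    have hne := halt (i + 1 + t) (by omega) (by omega)
    rw [ih (by omega)] at hne
    rw [← add_assoc]
    rcases hw (i + 1 + t + 1) (by omega) with h | h <;> rw [h] at hne ⊢ <;> split_ifs at hne ⊢ <;>
      omega

lemma exists_adjPair_of_not_toLex_lt {L R : ℕ → ℤ} {K : ℕ} (hK : K % 2 = 0)
    (hL : ∀ t < K, L t = if t % 2 = 0 then v + 1 else v) (hLK : L K = v)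
    (hR0 : R 0 = v + 1) (hR : ∀ t, v ≤ R t) (hlex : ¬ toLex L < toLex R) :
    ∃ t, 0 < t ∧ t ≤ K ∧ AdjPair R v (t - 1) := by
  classical
  have hex : ∃ t, L t ≠ R t ∨ t = K := ⟨K, Or.inr rfl⟩
  set t := Nat.find hex
  have hpre : ∀ s < t, L s = R s := fun s hs => by
    simpa using (not_or.mp (Nat.find_min hex hs)).1
  have htK : t ≤ K := Nat.find_min' hex (Or.inr rfl)
  have hRt : R t = v ∧ t % 2 = 0 := by
    by_cases heq : L t = R t
    · have htK' : t = K := (Nat.find_spec hex).resolve_left (not_not.mpr heq)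
      rw [← heq, htK', hLK]
      exact ⟨rfl, hK⟩
    · have hRL : R t < L t := lt_of_le_of_ne (not_lt.mp fun h => hlex ⟨t, hpre, h⟩) (Ne.symm heq)
      rcases htK.eq_or_lt with htK' | htK'
      · rw [htK', hLK] at hRL; linarith [hR K]
      · rw [hL t htK'] at hRL
        split_ifs at hRL with ht
        · exact ⟨by linarith [hR t], ht⟩
        · linarith [hR t]
  have ht0 : 0 < t := Nat.pos_of_ne_zero fun h => by rw [h, hR0] at hRt; linarith [hRt.1]
  refine ⟨t, ht0, htK, ?_, by rw [Nat.sub_add_cancel ht0]; exact hRt.1⟩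
  rw [← hpre _ (by omega), hL _ (by omega), if_neg (by omega)]

theorem LexBalanced.not_adjPair_lt (D : ℕ) : ∀ {w : ℕ → ℤ}, (∀ j < n, w j = v ∨ w j = v + 1) →
    LexBalanced n w v → ∀ {i : ℕ}, AdjPair w v i → AdjPair w (v + 1) (i + D) → i + D + 1 < n →
    False := by
  induction D using Nat.strong_induction_on with
  | _ D ih =>
  intro w hw hbal i h00 h11 hn
  have halt : ∀ m, i < m → m < i + D → w (m + 1) ≠ w m := by
    intro m hm1 hm2 heq
    rcases hw m (by omega) with h | h
    · exact ih (i + D - m) (by omega) hw hbal ⟨h, heq ▸ h⟩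
        (by rwa [show m + (i + D - m) = i + D by omega]) (by omega)
    · exact ih (m - i) (by omega) hw hbal h00
        (by rw [show i + (m - i) = m by omega]; exact ⟨h, heq.trans h⟩) (by omega)
  have hval := eq_ite_of_alternating hw (by omega) h00.2 halt
  have hD : D % 2 = 0 ∧ 2 ≤ D := by
    have hD0 : D ≠ 0 := fun h => by subst h; linarith [h00.1.symm.trans h11.1]
    have := hval (D - 1) (by omega)
    rw [show i + 1 + (D - 1) = i + D by omega, h11.1] at this
    split_ifs at this with h <;> omega
  obtain ⟨t, ht0, htK, hR⟩ := exists_adjPair_of_not_toLex_lt (v := v) (K := D - 2) (by omega)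
    (L := readLeft w (v + 2) (i + D - 1)) (R := readRight n w (v + 2) (i + D - 1))
    (fun t ht => by
      rw [readLeft, if_pos (by omega), show i + D - 1 - 1 - t = i + 1 + (D - 3 - t) by omega,
        hval _ (by omega)]
      split_ifs <;> omega)
    (by rw [readLeft, if_pos (by omega), show i + D - 1 - 1 - (D - 2) = i by omega, h00.1])
    (by rw [readRight, if_pos (by omega), show i + D - 1 + 2 + 0 = i + D + 1 by omega, h11.2])
    (le_readRight (fun j hj => by rcases hw j hj with h | h <;> omega) (by omega) _)
    (hbal.1 (i + D - 1) (by omega)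
      (by rw [show i + D - 1 = i + 1 + (D - 2) by omega, hval _ (by omega), if_pos (by omega)])
      (by rw [show i + D - 1 + 1 = i + D by omega]; exact h11.1))
  have hreal : i + D + 1 + (t - 1) + 1 < n := by
    by_contra h
    have := hR.2
    rw [readRight, if_neg (by omega)] at this
    omega
  have h00' : AdjPair w v (i + D + t) := by
    have := hR
    simp only [AdjPair, readRight, if_pos (by omega : i + D - 1 + 2 + (t - 1) < n),
      if_pos (by omega : i + D - 1 + 2 + (t - 1 + 1) < n)] at this
    rwa [show i + D - 1 + 2 + (t - 1) = i + D + t by omega,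
      show i + D - 1 + 2 + (t - 1 + 1) = i + D + t + 1 by omega] at this
  -- reflected, the pairs at `i + D` and `i + D + t` are a closer instance
  refine ih t (by omega) (fun j hj => hw _ (by omega)) hbal.reflect
    (h00'.reflect (by omega)) ?_ (by omega)
  rw [show n - 2 - (i + D + t) + t = n - 2 - (i + D) by omega]
  exact h11.reflect (by omega)

theorem LexBalanced.not_adjPair_and_adjPair (hw : ∀ j < n, w j = v ∨ w j = v + 1)
    (hbal : LexBalanced n w v) {i j : ℕ} (h00 : AdjPair w v i) (h11 : AdjPair w (v + 1) j)
    (hi : i + 1 < n) (hj : j + 1 < n) : False := by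
  rcases lt_trichotomy i j with hij | rfl | hij
  · exact hbal.not_adjPair_lt (j - i) hw h00 (by rwa [Nat.add_sub_cancel' hij.le]) (by omega)
  · linarith [h00.1.symm.trans h11.1]
  · refine hbal.reflect.not_adjPair_lt (i - j) (fun k hk => hw _ (by omega)) (h00.reflect hi) ?_
      (by omega)
    rw [show n - 2 - i + (i - j) = n - 2 - j by omega]
    exact h11.reflect hj

end Combinatorics

section Counting

variable {n : ℕ} {w : ℕ → ℤ} {v : ℤ}

lemma sum_range_eq_mul_add_card (hw : ∀ j < n, w j = v ∨ w j = v + 1) :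
    ∑ j ∈ range n, w j = n * v + #{j ∈ range n | w j = v + 1} := by
  have hsplit : ∀ j ∈ range n, w j = v + if w j = v + 1 then 1 else 0 := fun j hj => by
    rcases hw j (mem_range.mp hj) with h | h <;> simp [h]
  rw [sum_congr rfl hsplit, sum_add_distrib, sum_const, card_range, sum_boole, nsmul_eq_mul]

lemma card_filter_add_card_filter_succ (hw : ∀ j < n, w j = v ∨ w j = v + 1) :
    #{j ∈ range n | w j = v} + #{j ∈ range n | w j = v + 1} = n := by
  conv_rhs => rw [← card_range n, ← card_filter_add_card_filter_not (fun j => w j = v)]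
  congr 2
  refine filter_congr fun j hj => ?_
  rcases hw j (mem_range.mp hj) with h | h <;> simp [h]

lemma card_filter_succ_lt_of_forall_not_adjPair (hn : 0 < n) (h0 : w 0 = v)
    (hlast : w (n - 1) = v) (hw : ∀ j < n, w j = v ∨ w j = v + 1)
    (hno : ∀ j, j + 1 < n → ¬ AdjPair w (v + 1) j) :
    #{j ∈ range n | w j = v + 1} < #{j ∈ range n | w j = v} := by
  calc #{j ∈ range n | w j = v + 1} ≤ #(({j ∈ range n | w j = v}).erase 0) := by
        refine card_le_card_of_injOn (· + 1) (fun j hj => ?_) (add_left_injective 1).injOn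
        simp only [coe_filter, mem_range, Set.mem_ofPred_eq, coe_erase, Set.mem_sdiff,
          Set.mem_singleton_iff] at hj ⊢
        have hjn : j + 1 < n := by
          by_contra h
          rw [show j = n - 1 by omega, hlast] at hj
          linarith [hj.2]
        exact ⟨⟨hjn, (hw _ hjn).resolve_right fun h => hno j hjn ⟨hj.2, h⟩⟩, by omega⟩
    _ < #{j ∈ range n | w j = v} := card_erase_lt_of_mem (by simp [hn, h0])

lemma exists_isMaxRun_iff {c : ℤ} {i : ℕ} :
    (∃ l, IsMaxRun n w c i l) ↔ i < n ∧ w i = c ∧ (0 < i → w (i - 1) ≠ c) := by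
  classical
  constructor
  · rintro ⟨l, hl, hil, hall, hleft, -⟩
    exact ⟨by omega, by simpa using hall 0 hl, hleft⟩
  rintro ⟨hi, hwi, hleft⟩
  have hex : ∃ l, 0 < l ∧ (n ≤ i + l ∨ w (i + l) ≠ c) := ⟨n - i, by omega, Or.inl (by omega)⟩
  obtain ⟨hl, hend⟩ := Nat.find_spec hex
  have hinside : ∀ k, 0 < k → k < Nat.find hex → i + k < n ∧ w (i + k) = c := fun k hk hkl => by
    have := Nat.find_min hex hkl
    push Not at this
    exact this hk
  refine ⟨Nat.find hex, hl, ?_, fun k hk => ?_, hleft, fun h => hend.resolve_left (by omega)⟩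
  · rcases Nat.lt_or_ge 1 (Nat.find hex) with h | h
    · have := hinside (Nat.find hex - 1) (by omega) (by omega); omega
    · omega
  · rcases Nat.eq_zero_or_pos k with rfl | hk0
    · simpa using hwi
    · exact (hinside k hk0 hk).2

lemma ncard_isMaxRun_add_one (hn : 0 < n) (h0 : w 0 = v) (hlast : w (n - 1) = v)
    (hw : ∀ j < n, w j = v ∨ w j = v + 1) (hno : ∀ j, j + 1 < n → ¬ AdjPair w v j) :
    {i | ∃ l, IsMaxRun n w (v + 1) i l}.ncard + 1 = #{j ∈ range n | w j = v} := by
  have hstarts : {i | ∃ l, IsMaxRun n w (v + 1) i l} =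
      (({j ∈ range (n - 1) | w j = v}).image (· + 1) : Set ℕ) := by
    ext i
    simp only [Set.mem_ofPred_eq, exists_isMaxRun_iff, coe_image, coe_filter, mem_range,
      Set.mem_image]
    constructor
    · rintro ⟨hi, hwi, hprev⟩
      have hi0 : 0 < i := Nat.pos_of_ne_zero fun h => by subst h; linarith [h0.symm.trans hwi]
      exact ⟨i - 1, ⟨by omega, (hw _ (by omega)).resolve_right (hprev hi0)⟩, by omega⟩
    · rintro ⟨j, ⟨hj, hwj⟩, rfl⟩
      refine ⟨by omega, (hw _ (by omega)).resolve_left fun h => hno j (by omega) ⟨hwj, h⟩,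
        fun _ => by simp [hwj]⟩
  rw [hstarts, Set.ncard_coe_finset, card_image_of_injective _ (add_left_injective 1),
    show n = n - 1 + 1 by omega, range_add_one, filter_insert, Nat.add_sub_cancel,
    if_pos hlast, card_insert_of_notMem (by simp)]

end Counting

theorem stmt11_general (p s r : ℕ) (hp3 : 3 ≤ p) (hr : 3 ≤ r) (hrs : r < s)
    (g : ℕ) (hgdef : g = (s - 1) % (r - 1)) (hg : r - 1 ≤ 2 * g)
    (fq : ℤ) (hfq : fq = (((s - 1) / (r - 1) : ℕ) : ℤ))
    (d : ℕ → ℤ)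
    (hmem : ∀ j < r - 1, d j = fq ∨ d j = fq + 1)
    (hsum : ∑ j ∈ Finset.range (r - 1), d j = (s : ℤ) - 1)
    (hframe : d 0 = fq ∧ d (r - 2) = fq)
    (hmin : ∀ b : ℕ → ℤ, Admissible s r b → hp p r (deltaInv d) ≤ hp p r b) :
    (∀ i l, IsMaxRun (r - 1) d fq i l → l = 1) ∧
    ((Finset.range (r - 1)).filter (fun j => d j = fq)).card = r - g - 1 ∧
    (∀ j, j + 1 < r - 1 → ¬ (d j = fq ∧ d (j + 1) = fq)) ∧
    ((Finset.range (r - 1)).filter (fun j => d j = fq + 1)).card = g ∧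
    {i | ∃ l, IsMaxRun (r - 1) d (fq + 1) i l}.ncard = r - g - 2 := by
  obtain ⟨hfirst, hlast⟩ := hframe
  rw [show r - 2 = r - 1 - 1 by omega] at hlast
  have hv : 1 ≤ fq := by
    rw [hfq]; exact_mod_cast (Nat.one_le_div_iff (by omega)).mpr (by omega)
  have hdiv : (s : ℤ) - 1 = ((r - 1 : ℕ) : ℤ) * fq + g := by
    have := congrArg (Nat.cast : ℕ → ℤ) (Nat.div_add_mod (s - 1) (r - 1))
    push_cast [← hgdef, ← hfq] at this
    omega
  have hcard1 : #{j ∈ range (r - 1) | d j = fq + 1} = g := by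
    have := sum_range_eq_mul_add_card hmem
    rw [hsum, hdiv] at this
    omega
  have hcard := card_filter_add_card_filter_succ hmem
  have hbal := lexBalanced_of_isMin hp3 (by omega) hv hmem hsum hmin
  obtain ⟨k, hk, h11⟩ : ∃ k, k + 1 < r - 1 ∧ AdjPair d (fq + 1) k := by
    by_contra! h
    have := card_filter_succ_lt_of_forall_not_adjPair (by omega) hfirst hlast hmem h
    omega
  have hno00 : ∀ j, j + 1 < r - 1 → ¬ AdjPair d fq j := fun j hj h00 =>
    hbal.not_adjPair_and_adjPair hmem h00 h11 hj hk
  refine ⟨fun i l hrun => ?_, by omega, hno00, hcard1, ?_⟩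
  · obtain ⟨hl, hil, hall, -⟩ := hrun
    by_contra hl1
    exact hno00 i (by omega) ⟨by simpa using hall 0 hl, hall 1 (by omega)⟩
  · have := ncard_isMaxRun_add_one (by omega) hfirst hlast hmem hno00
    omega

/-- Proposition 5.1(i) (partly): if `(r-1) ∤ (s-1)`, `g ≡ s-1 mod (r-1)` is the least
positive residue, `d ∈ Biv*(s,r)` (entries in `{[q], [q]+1}`, summing to `s-1`, first and
last entries `[q]`) with `h_p(δ⁻¹(d)) = min h_p`, and `2g ≥ r-1`, then `η_max(d) = 1`:
every maximal `[q]`-block of `d` is a singleton; hence `d` has exactly `r-g-1` entries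
`[q]`, no two adjacent, exactly `g` entries `[q]+1`, and exactly `w = r-g-2` maximal
`[q]+1`-blocks (whose average length is therefore `q₂ = g/(r-g-2)`). -/
theorem stmt11 (p s r : ℕ) (hpp : p.Prime) (hp3 : 3 ≤ p) (hr : 3 ≤ r) (hrs : r < s)
    (hndvd1 : ¬ (r - 1) ∣ (s - 1))
    (g : ℕ) (hgdef : g = (s - 1) % (r - 1)) (hg : r - 1 ≤ 2 * g)
    (fq : ℤ) (hfq : fq = (((s - 1) / (r - 1) : ℕ) : ℤ))
    (d : ℕ → ℤ)
    (hmem : ∀ j < r - 1, d j = fq ∨ d j = fq + 1)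
    (hsum : ∑ j ∈ Finset.range (r - 1), d j = (s : ℤ) - 1)
    (hframe : d 0 = fq ∧ d (r - 2) = fq)
    (hmin : ∀ b : ℕ → ℤ, Admissible s r b → hp p r (deltaInv d) ≤ hp p r b) :
    (∀ i l, IsMaxRun (r - 1) d fq i l → l = 1) ∧
    ((Finset.range (r - 1)).filter (fun j => d j = fq)).card = r - g - 1 ∧
    (∀ j, j + 1 < r - 1 → ¬ (d j = fq ∧ d (j + 1) = fq)) ∧
    ((Finset.range (r - 1)).filter (fun j => d j = fq + 1)).card = g ∧
    {i | ∃ l, IsMaxRun (r - 1) d (fq + 1) i l}.ncard = r - g - 2 :=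
  stmt11_general p s r hp3 hr hrs g hgdef hg fq hfq d hmem hsum hframe hmin
end

section
/- Let p ≥ 3 be a prime and let 3 ≤ r < s be integers with (r-1) ∤ (s-1), and let g be the least positive residue of s-1 modulo r-1. Suppose d ∈ Biv*(s,r) satisfies h_p(δ^{-1}(d)) = min h_p and 2g ≤ r-2. Then θ_max(d) = 1 and η(d) := η_max(d) - η_min(d) ≤ 1; that is, every maximal [q+1]-block of d is a singleton, and the lengths of any two maximal [q]-blocks of d differ by at most 1. -/
/-!
Write `a = δ⁻¹(d)`, `m = [q]`, and call the entries `m + 1` of `d` separators. Lowering an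
interior point `a_t` by one changes `h_p` by `(p - 1) L - (1 - p⁻¹) R`, where `L` and `R` are the
geometric sums `Σ p^(-|a_t - a_k|)` over the points left and right of `a_t`. For gaps `≥ 1` and
`p > 2` such a sum strictly decreases along the lexicographic order of the gaps read away from
`a_t`, a sequence that runs out counting as largest. Hence minimality forbids, at a separator
followed by an `m`, that the gaps read leftwards from the separator be lexicographically larger
than those read rightwards from that `m`.

Suppose two maximal blocks of `m`s differ in length by at least two, and take such a pair at
minimal distance; as `h_p` is invariant under reversing `d`, the shorter block `[x, y)` may be
taken on the left. Reading outwards from the separator at `y`, the first disagreement either is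
such a forbidden comparison, or exhibits a block strictly between the two, or a mirrored block left
of `[x, y)`, forming a closer unbalanced pair. For `θ_max = 1`: two adjacent `m + 1`s enclose an
empty block, while `2g ≤ r - 2` forces two adjacent `m`s.
-/

open Finset

section GeomTail

variable {P : ℝ} {c c' : ℕ → ℤ} {k k' : ℕ}

noncomputable def geomTail (P : ℝ) (c : ℕ → ℤ) (k : ℕ) : ℝ :=
  ∑ j ∈ range k, P ^ (-∑ i ∈ range (j + 1), c i)

@[simp]
lemma geomTail_zero : geomTail P c 0 = 0 := by
  simp [geomTail]

lemma geomTail_succ (hP : P ≠ 0) :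
    geomTail P c (k + 1) = P ^ (-c 0) * (1 + geomTail P (fun i => c (i + 1)) k) := by
  simp only [geomTail, sum_range_succ' _ k, sum_range_succ' c, mul_add, mul_sum, ← zpow_add₀ hP,
    neg_add, add_comm (-c 0)]
  simp [add_comm]

lemma geomTail_congr (h : ∀ i < k, c i = c' i) : geomTail P c k = geomTail P c' k :=
  sum_congr rfl fun j hj => by
    rw [sum_congr rfl fun i hi => h i (by simp at hi hj; omega)]

lemma geomTail_nonneg (hP : 0 ≤ P) : 0 ≤ geomTail P c k :=
  sum_nonneg fun _ _ => zpow_nonneg hP _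

lemma zpow_neg_head_le_geomTail (hP : 0 < P) (hk : 0 < k) : P ^ (-c 0) ≤ geomTail P c k := by
  obtain ⟨k, rfl⟩ := Nat.exists_eq_add_of_lt hk
  rw [zero_add, geomTail_succ hP.ne']
  have := geomTail_nonneg (c := fun i => c (i + 1)) (k := k) hP.le
  nlinarith [zpow_pos hP (-c 0)]

lemma geomTail_le (hP : 1 < P) (hc : ∀ i < k, 1 ≤ c i) :
    geomTail P c k ≤ P ^ (-c 0) * (P / (P - 1)) := by
  induction k generalizing c with
  | zero =>
    rw [geomTail_zero]
    exact mul_nonneg (zpow_nonneg (by linarith) _) (div_nonneg (by linarith) (by linarith))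
  | succ k ih =>
    have hP1 : 0 < P - 1 := by linarith
    rw [geomTail_succ (by positivity)]
    gcongr
    rcases k.eq_zero_or_pos with rfl | hk
    · rw [geomTail_zero, add_zero, le_div_iff₀ hP1]; linarith
    calc 1 + geomTail P (fun i => c (i + 1)) k
        ≤ 1 + P ^ (-c 1) * (P / (P - 1)) := by
          gcongr; exact ih fun i hi => hc (i + 1) (by omega)
      _ ≤ 1 + P ^ (-1 : ℤ) * (P / (P - 1)) := by
          gcongr
          · exact hP.le
          · linarith [hc 1 (by omega)]
      _ = P / (P - 1) := by field_simp; ring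

lemma geomTail_lt_of_head_lt (hP : 2 < P) (hc : ∀ i < k, 1 ≤ c i) (hk' : 0 < k')
    (h : c' 0 < c 0) : geomTail P c k < geomTail P c' k' := by
  have hP0 : 0 < P := by linarith
  calc geomTail P c k ≤ P ^ (-c 0) * (P / (P - 1)) := geomTail_le (by linarith) hc
    _ ≤ P ^ (-c' 0 - 1) * (P / (P - 1)) := by
        gcongr
        · exact div_nonneg hP0.le (by linarith)
        · linarith
        · omega
    _ = P ^ (-c' 0) * (1 / (P - 1)) := by
        rw [zpow_sub_one₀ hP0.ne']; field_simp
    _ < P ^ (-c' 0) := by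
        apply mul_lt_of_lt_one_right (zpow_pos hP0 _)
        rw [div_lt_one] <;> linarith
    _ ≤ geomTail P c' k' := zpow_neg_head_le_geomTail hP0 hk'

/-- In this lexicographic order a sequence that runs out is larger than any continuation. -/
lemma geomTail_lt_of_lex (hP : 2 < P) (J : ℕ) (hc : ∀ i < k, 1 ≤ c i) (hagree : ∀ j < J, c j = c' j)
    (hlex : (k = J ∧ J < k') ∨ (J < k ∧ J < k' ∧ c' J < c J)) :
    geomTail P c k < geomTail P c' k' := by
  have hP0 : 0 < P := by linarith
  induction J generalizing c c' k k' with
  | zero =>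
    rcases hlex with ⟨rfl, hk'⟩ | ⟨-, hk', h⟩
    · simpa using lt_of_lt_of_le (zpow_pos hP0 _) (zpow_neg_head_le_geomTail hP0 hk')
    · exact geomTail_lt_of_head_lt hP hc hk' h
  | succ J ih =>
    obtain ⟨k, rfl⟩ : ∃ k₀, k = k₀ + 1 := ⟨k - 1, by omega⟩
    obtain ⟨k', rfl⟩ : ∃ k₀, k' = k₀ + 1 := ⟨k' - 1, by omega⟩
    rw [geomTail_succ hP0.ne', geomTail_succ hP0.ne', hagree 0 J.succ_pos]
    gcongr
    exact ih (fun i hi => hc _ (by omega)) (fun j hj => hagree _ (by omega)) (by omega)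

end GeomTail

section HP

variable {p r : ℕ}

/-- Lowering the point `a t` by one multiplies the terms pairing it with points on its left by
`p` and those pairing it with points on its right by `p⁻¹`. -/
lemma hp_update_sub_one (hp0 : (p : ℝ) ≠ 0) (a : ℕ → ℤ) {t : ℕ} (ht : t < r) :
    hp p r (Function.update a t (a t - 1)) = hp p r a
      + ((p : ℝ) - 1) * ∑ k ∈ range t, (p : ℝ) ^ (a k - a t)
      + ((p : ℝ)⁻¹ - 1) * ∑ i ∈ Ico (t + 1) r, (p : ℝ) ^ (a t - a i) := by
  set f : ℕ → ℕ → ℝ := fun k i => if k < i then (p : ℝ) ^ (a k - a i) else 0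
  have hterm : ∀ k i, (if k < i then (p : ℝ) ^ (Function.update a t (a t - 1) k
      - Function.update a t (a t - 1) i) else 0)
      = f k i + (if i = t then ((p : ℝ) - 1) * f k i else 0)
        + (if k = t then ((p : ℝ)⁻¹ - 1) * f k i else 0) := by
    have hlow : ∀ x y : ℤ, (p : ℝ) ^ (x - 1 - y) = (p : ℝ) ^ (x - y) * (p : ℝ)⁻¹ := fun x y => by
      rw [← zpow_sub_one₀ hp0]; ring_nf
    have hhigh : ∀ x y : ℤ, (p : ℝ) ^ (x - (y - 1)) = (p : ℝ) ^ (x - y) * p := fun x y => by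
      rw [← zpow_add_one₀ hp0]; ring_nf
    intro k i
    simp only [f, Function.update_apply]
    split_ifs <;> first | omega | (subst_vars; (try simp only [hlow, hhigh]); ring)
  have hleft : ∑ k ∈ range r, f k t = ∑ k ∈ range t, (p : ℝ) ^ (a k - a t) := by
    rw [← sum_range_add_sum_Ico _ ht.le, sum_eq_zero (s := Ico t r) fun k hk => ?_]
    · simp only [add_zero, f]; exact sum_congr rfl fun k hk => if_pos (mem_range.1 hk)
    · simp only [f, if_neg (by simp at hk; omega : ¬ k < t)]
  have hright : ∑ i ∈ range r, f t i = ∑ i ∈ Ico (t + 1) r, (p : ℝ) ^ (a t - a i) := by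
    rw [← sum_range_add_sum_Ico _ (by omega : t + 1 ≤ r),
      sum_eq_zero (s := range (t + 1)) fun i hi => ?_]
    · simp only [zero_add, f]; exact sum_congr rfl fun i hi => if_pos (by simp at hi; omega)
    · simp only [f, if_neg (by simp at hi; omega : ¬ t < i)]
  simp only [hp, hterm, sum_add_distrib, sum_ite_eq', sum_ite_irrel, sum_const_zero, mem_range,
    if_pos ht, ← mul_sum, hleft, hright, f]

lemma deltaInv_sub_deltaInv (d : ℕ → ℤ) {k t : ℕ} (h : k ≤ t) :
    deltaInv d t - deltaInv d k = ∑ j ∈ Ico k t, d j := by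
  rw [deltaInv, deltaInv, sum_Ico_eq_sub _ h]

lemma sum_zpow_deltaInv_left (d : ℕ → ℤ) (t : ℕ) :
    ∑ k ∈ range t, (p : ℝ) ^ (deltaInv d k - deltaInv d t)
      = geomTail p (fun j => d (t - 1 - j)) t := by
  rw [geomTail, ← sum_range_reflect]
  refine sum_congr rfl fun j hj => ?_
  have hj : j < t := mem_range.1 hj
  rw [← neg_sub, deltaInv_sub_deltaInv d (by omega), sum_Ico_eq_sum_range, ← sum_range_reflect]
  congr 2
  rw [show t - (t - 1 - j) = j + 1 by omega]
  exact sum_congr rfl fun i hi => by congr 1; simp at hi; omega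

lemma sum_zpow_deltaInv_right (d : ℕ → ℤ) {t n : ℕ} (ht : t ≤ n) :
    ∑ i ∈ Ico (t + 1) (n + 1), (p : ℝ) ^ (deltaInv d t - deltaInv d i)
      = geomTail p (fun j => d (t + j)) (n - t) := by
  rw [geomTail, sum_Ico_eq_sum_range, show n + 1 - (t + 1) = n - t by omega]
  refine sum_congr rfl fun j _ => ?_
  rw [← neg_sub, deltaInv_sub_deltaInv d (by omega), sum_Ico_eq_sum_range,
    show t + 1 + j - t = j + 1 by omega]

lemma deltaInv_reverse (d : ℕ → ℤ) {n i : ℕ} (hi : i ≤ n) :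
    deltaInv (fun j => d (n - 1 - j)) i = deltaInv d n - deltaInv d (n - i) := by
  rw [deltaInv_sub_deltaInv d (by omega), sum_Ico_eq_sum_range, ← sum_range_reflect, deltaInv,
    show n - (n - i) = i by omega]
  exact sum_congr rfl fun j hj => by congr 1; simp at hj; omega

lemma hp_deltaInv_reverse (d : ℕ → ℤ) (n : ℕ) :
    hp p (n + 1) (deltaInv (fun j => d (n - 1 - j))) = hp p (n + 1) (deltaInv d) := by
  rw [hp, hp, ← sum_product', ← sum_product']
  refine sum_nbij' (fun q => (n - q.2, n - q.1)) (fun q => (n - q.2, n - q.1)) ?_ ?_ ?_ ?_ ?_ <;>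
    simp only [mem_product, mem_range, Prod.forall, Prod.mk.injEq]
  iterate 4 exact fun k i h => by omega
  intro k i ⟨hk, hi⟩
  by_cases h : k < i
  · rw [if_pos h, if_pos (by omega), deltaInv_reverse d (by omega), deltaInv_reverse d (by omega)]
    ring_nf
  · rw [if_neg h, if_neg (by omega)]

end HP

/-- `d` has entries in `{m, m + 1}` (so lies in `Biv(s, n + 1)` when `m = [q]`), sums to `s - 1`,
and `δ⁻¹(d)` minimizes `h_p` on `A(s, n + 1)`. -/
structure IsBivMinimizer (p s n : ℕ) (m : ℤ) (d : ℕ → ℤ) : Prop where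
  one_le : 1 ≤ m
  mem : ∀ j < n, d j = m ∨ d j = m + 1
  sum_eq : ∑ j ∈ range n, d j = (s : ℤ) - 1
  minimal : ∀ b, Admissible s (n + 1) b → hp p (n + 1) (deltaInv d) ≤ hp p (n + 1) b

namespace IsBivMinimizer

variable {p s n : ℕ} {m : ℤ} {d : ℕ → ℤ}

lemma reverse (hd : IsBivMinimizer p s n m d) :
    IsBivMinimizer p s n m (fun j => d (n - 1 - j)) where
  one_le := hd.one_le
  mem j hj := hd.mem _ (by omega)
  sum_eq := by rw [sum_range_reflect d n]; exact hd.sum_eq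
  minimal b hb := by rw [hp_deltaInv_reverse]; exact hd.minimal b hb

lemma one_le_apply (hd : IsBivMinimizer p s n m d) {j : ℕ} (hj : j < n) : 1 ≤ d j := by
  rcases hd.mem j hj with h | h <;> linarith [hd.one_le]

lemma eq_add_one_of_ne (hd : IsBivMinimizer p s n m d) {j : ℕ} (hj : j < n) (h : d j ≠ m) :
    d j = m + 1 :=
  (hd.mem j hj).resolve_left h

lemma admissible_update_sub_one (hd : IsBivMinimizer p s n m d) {t : ℕ} (ht : 1 ≤ t)
    (htn : t < n) (hdt : 2 ≤ d (t - 1)) :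
    Admissible s (n + 1) (Function.update (deltaInv d) t (deltaInv d t - 1)) := by
  have hstep : ∀ i, deltaInv d (i + 1) = deltaInv d i + d i := fun i => sum_range_succ _ _
  refine ⟨?_, ?_, fun i hi => ?_⟩
  · rw [Function.update_of_ne (by omega)]; simp [deltaInv]
  · rw [Nat.add_sub_cancel, Function.update_of_ne (by omega)]; exact hd.sum_eq
  · have := hstep i
    have := hd.one_le_apply (j := i) (by omega)
    simp only [Function.update_apply]
    split_ifs <;> subst_vars <;> first | omega | (simp only [Nat.add_sub_cancel] at hdt; omega)

/-- Minimality against lowering the point `δ⁻¹(d)_t` by one. -/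
lemma geomTail_right_le (hd : IsBivMinimizer p s n m d) (hP : 1 < (p : ℝ)) {t : ℕ}
    (ht : 1 ≤ t) (htn : t < n) (hdt : 2 ≤ d (t - 1)) :
    geomTail p (fun j => d (t + j)) (n - t) ≤ p * geomTail p (fun j => d (t - 1 - j)) t := by
  have h := hd.minimal _ (hd.admissible_update_sub_one ht htn hdt)
  rw [hp_update_sub_one (by positivity) _ (by omega), sum_zpow_deltaInv_left,
    sum_zpow_deltaInv_right d htn.le] at h
  set L := geomTail p (fun j => d (t - 1 - j)) t
  set R := geomTail p (fun j => d (t + j)) (n - t)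
  have hchange : ((p : ℝ) - 1) * L + ((p : ℝ)⁻¹ - 1) * R = (p - 1) / p * (p * L - R) := by
    field_simp; ring
  have hnonneg : 0 ≤ ((p : ℝ) - 1) / p * (p * L - R) := by rw [← hchange]; linarith
  have := (mul_nonneg_iff_of_pos_left (div_pos (by linarith) (by linarith))).mp hnonneg
  linarith

/-- At a separator `d y = m + 1` followed by `d (y + 1) = m`, compare the word read leftwards
from `y - 1` with the word read rightwards from `y + 2`: if the left one runs out first, or has
`m + 1` against `m` at the first disagreement, then moving the separator right lowers `h_p`. -/
lemma false_of_descent (hd : IsBivMinimizer p s n m d) (hP : 2 < (p : ℝ)) {y J : ℕ}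
    (hy : d y = m + 1) (hy1 : d (y + 1) = m) (hJn : y + 2 + J < n)
    (hagree : ∀ j < J, d (y - 1 - j) = d (y + 2 + j))
    (hlex : J = y ∨ (J < y ∧ d (y - 1 - J) = m + 1 ∧ d (y + 2 + J) = m)) : False := by
  have hP0 : (p : ℝ) ≠ 0 := by positivity
  have h := hd.geomTail_right_le (by linarith) (t := y + 1) (by omega) (by omega)
    (by simp only [Nat.add_sub_cancel, hy]; linarith [hd.one_le])
  rw [show n - (y + 1) = n - y - 2 + 1 by omega, geomTail_succ hP0, geomTail_succ hP0] at h
  simp only [add_zero, Nat.add_sub_cancel, Nat.sub_zero, hy, hy1] at h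
  have hleft : geomTail p (fun i => d (y - (i + 1))) y = geomTail p (fun j => d (y - 1 - j)) y :=
    geomTail_congr fun i _ => by congr 1; omega
  have hright : geomTail p (fun i => d (y + 1 + (i + 1))) (n - y - 2)
      = geomTail p (fun j => d (y + 2 + j)) (n - y - 2) :=
    geomTail_congr fun i _ => by congr 1; omega
  rw [hleft, hright, ← mul_assoc, ← zpow_one_add₀ hP0, show 1 + -(m + 1) = -m by ring] at h
  have hlt :
      geomTail p (fun j => d (y - 1 - j)) y < geomTail p (fun j => d (y + 2 + j)) (n - y - 2) :=
    geomTail_lt_of_lex hP J (fun i hi => hd.one_le_apply (by omega)) hagree (by omega)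
  have := le_of_mul_le_mul_left h (zpow_pos (by linarith : (0:ℝ) < p) (-m))
  linarith

end IsBivMinimizer

/-- `[x, y)` is a maximal block of `m`s in `(d 0, …, d (n - 1))`; it may be empty, between two
adjacent `m + 1`s or at either end. -/
structure IsBlock (n : ℕ) (m : ℤ) (d : ℕ → ℤ) (x y : ℕ) : Prop where
  le : x ≤ y
  le_n : y ≤ n
  eq : ∀ k, x ≤ k → k < y → d k = m
  left : 0 < x → d (x - 1) = m + 1
  right : y < n → d y = m + 1

namespace IsBlock

variable {n : ℕ} {m : ℤ} {d : ℕ → ℤ} {x y x' y' : ℕ}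

lemma le_of_ne (h : IsBlock n m d x y) {q : ℕ} (hxq : x ≤ q) (hq : d q ≠ m) : y ≤ q := by
  by_contra! hqy
  exact hq (h.eq q hxq hqy)

lemma le_of_lt (h : IsBlock n m d x y) (h' : IsBlock n m d x' y') (hx : x < x') : y ≤ x' := by
  by_contra! hy
  have := h.eq (x' - 1) (by omega) (by omega)
  have := h'.left (by omega)
  omega

lemma reverse (h : IsBlock n m d x y) : IsBlock n m (fun j => d (n - 1 - j)) (n - y) (n - x) where
  le := by have := h.le; omega
  le_n := by omega
  eq k hk hk' := h.eq _ (by omega) (by have := h.le_n; omega)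
  left hy := by
    have := h.le_n
    rw [show n - 1 - (n - y - 1) = y by omega]; exact h.right (by omega)
  right hx := by
    have := h.le; have := h.le_n
    rw [show n - 1 - (n - x) = x - 1 by omega]; exact h.left (by omega)

lemma of_isMaxRun (hmem : ∀ j < n, d j = m ∨ d j = m + 1) {i l : ℕ} (h : IsMaxRun n d m i l) :
    IsBlock n m d i (i + l) where
  le := by omega
  le_n := h.2.1
  eq k hk hk' := by simpa [Nat.add_sub_cancel' hk] using h.2.2.1 (k - i) (by omega)
  left hi := (hmem _ (by have := h.2.1; omega)).resolve_left (h.2.2.2.1 hi)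
  right hl := (hmem _ hl).resolve_left (h.2.2.2.2 hl)

lemma exists_of_forall_eq (hmem : ∀ j < n, d j = m ∨ d j = m + 1) {lo hi : ℕ} (hlo : lo ≤ hi)
    (hhi : hi ≤ n) (hrun : ∀ k, lo ≤ k → k < hi → d k = m) :
    ∃ w z, IsBlock n m d w z ∧ w ≤ lo ∧ hi ≤ z := by
  classical
  have hL : ∃ w, ∀ k, w ≤ k → k < hi → d k = m := ⟨lo, hrun⟩
  have hR : ∃ z, hi ≤ z ∧ (z = n ∨ d z ≠ m) := ⟨n, hhi, .inl rfl⟩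
  have hw : Nat.find hL ≤ lo := Nat.find_min' hL hrun
  have hzn : Nat.find hR ≤ n := Nat.find_min' hR ⟨hhi, .inl rfl⟩
  obtain ⟨hz, hzd⟩ := Nat.find_spec hR
  refine ⟨Nat.find hL, Nat.find hR,
    ⟨by omega, hzn, fun k hk hk' => ?_, fun hw₀ => ?_, fun hz' => ?_⟩, hw, hz⟩
  · by_cases hkhi : k < hi
    · exact Nat.find_spec hL k hk hkhi
    · have := Nat.find_min hR hk'
      push Not at this
      exact (this (by omega)).2
  · have := Nat.find_min hL (Nat.sub_one_lt_of_lt hw₀)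
    push Not at this
    obtain ⟨k, hk, hkhi, hdk⟩ := this
    have hk' : k = Nat.find hL - 1 := by
      by_contra hne
      exact hdk (Nat.find_spec hL k (by omega) hkhi)
    subst hk'
    exact (hmem _ (by omega)).resolve_left hdk
  · exact (hmem _ hz').resolve_left (hzd.resolve_left (by omega))

lemma exists_of_ne_of_ne (hmem : ∀ j < n, d j = m ∨ d j = m + 1) {y q : ℕ} (hyq : y < q)
    (hqn : q < n) (hy : d y ≠ m) (hq : d q ≠ m) : ∃ z, y < z ∧ IsBlock n m d z q := by
  obtain ⟨z, z', hG, hz, hz'⟩ :=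
    exists_of_forall_eq hmem (le_refl q) hqn.le fun k h h' => absurd h' (not_lt.2 h)
  obtain rfl : z' = q := le_antisymm (hG.le_of_ne hz hq) hz'
  refine ⟨z, not_le.1 fun hzy => ?_, hG⟩
  have := hG.le_of_ne hzy hy
  omega

end IsBlock

lemma forall_lt_or_exists_least_not (P : ℕ → Prop) (K : ℕ) :
    (∀ j < K, P j) ∨ ∃ J < K, (∀ j < J, P j) ∧ ¬ P J := by
  classical
  by_cases h : ∀ j < K, P j
  · exact .inl h
  push Not at h
  obtain ⟨hK, hP⟩ := Nat.find_spec h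
  refine .inr ⟨Nat.find h, hK, fun j hj => ?_, hP⟩
  by_contra hj'
  exact Nat.find_min h hj ⟨by omega, hj'⟩

def BlocksBalancedBelow (n : ℕ) (m : ℤ) (d : ℕ → ℤ) (μ : ℕ) : Prop :=
  ∀ x₁ y₁ x₂ y₂, IsBlock n m d x₁ y₁ → IsBlock n m d x₂ y₂ → y₁ ≤ x₂ → x₂ - y₁ < μ →
    y₂ - x₂ ≤ y₁ - x₁ + 1 ∧ y₁ - x₁ ≤ y₂ - x₂ + 1

namespace IsBivMinimizer

variable {p s n : ℕ} {m : ℤ} {d : ℕ → ℤ} {x y x' y' : ℕ}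

/-- If the words read outwards from the separator after `[x, y)` agree as far as the first
`y - x + 2` letters of `[x', y')`, the mirror image of those letters is a long block left of
`[x, y)` and closer to it. -/
lemma false_of_agree_past_long_block (hd : IsBivMinimizer p s n m d) (h₁ : IsBlock n m d x y)
    (h₂ : IsBlock n m d x' y') (hyx : y < x') (hlong : y - x + 2 ≤ y' - x')
    (IH : BlocksBalancedBelow n m d (x' - y))
    (hagree : ∀ j < x' - y + (y - x), j < y ∧ d (y - 1 - j) = d (y + 2 + j)) : False := by
  have hy'n := h₂.le_n
  have hxy := h₁.le
  have hlast := (hagree (x' - y + (y - x) - 1) (by omega)).1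
  obtain ⟨-, hsep⟩ := hagree (y - x) (by omega)
  rw [show y - 1 - (y - x) = x - 1 by omega, h₁.left (by omega)] at hsep
  have hfar : y + 2 + (y - x) < x' := by
    by_contra!
    have := h₂.eq (y + 2 + (y - x)) (by omega) (by omega)
    omega
  have hrun : ∀ k, 2 * y - x' - (y - x) ≤ k → k < 2 * y + 2 - x' → d k = m := by
    intro k hk hk'
    obtain ⟨-, hk⟩ := hagree (y - 1 - k) (by omega)
    rw [show y - 1 - (y - 1 - k) = k by omega] at hk
    rw [hk]
    exact h₂.eq _ (by omega) (by omega)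
  obtain ⟨w, z, hG, hw, hz⟩ := IsBlock.exists_of_forall_eq hd.mem (by omega) (by omega) hrun
  have hzx : z ≤ x - 1 := hG.le_of_ne (by omega) (by rw [h₁.left (by omega)]; omega)
  have := (IH w z x y hG h₁ (by omega) (by omega)).2
  omega

/-- The first disagreement has `m` on the left against a separator at `q < x'` on the right.
The block `[z, q)` lies between the two blocks, so it has length `y - x + 1`; its mirror image,
extended by the mirror of `q`, is then a block of length `y - x + 2`. -/
lemma false_of_first_mismatch_at_separator (hd : IsBivMinimizer p s n m d)
    (h₁ : IsBlock n m d x y) (h₂ : IsBlock n m d x' y') (hlong : y - x + 2 ≤ y' - x')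
    (IH : BlocksBalancedBelow n m d (x' - y)) {J : ℕ} (hJy : J < y) (hJx : y + 2 + J < x')
    (hagree : ∀ j < J, d (y - 1 - j) = d (y + 2 + j))
    (hl : d (y - 1 - J) = m) (hr : d (y + 2 + J) = m + 1) : False := by
  have hy'n := h₂.le_n
  have hxy := h₁.le
  obtain ⟨z, hyz, hR⟩ := IsBlock.exists_of_ne_of_ne hd.mem (y := y) (q := y + 2 + J)
    (by omega) (by omega) (by rw [h₁.right (by omega)]; omega) (by omega)
  have hzq := hR.le
  have h₁R := (IH x y z _ h₁ hR hyz.le (by omega)).1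
  have hR₂ := (IH z _ x' y' hR h₂ (by omega) (by omega)).1
  have hmir : ∀ j ≤ J, z ≤ y + 2 + j → d (y - 1 - j) = m := by
    intro j hj hz
    rcases hj.lt_or_eq with hj | rfl
    · rw [hagree j hj]; exact hR.eq _ hz (by omega)
    · exact hl
  by_cases hzy : z ≤ y + 2
  · -- the mirror image lies inside `[x, y)`, which is then too long
    have : x ≤ y - 1 - J := by
      by_contra!
      have h := hmir (y - x) (by omega) (by omega)
      rw [show y - 1 - (y - x) = x - 1 by omega, h₁.left (by omega)] at h
      omega
    omega
  have hsep : d (2 * y + 2 - z) = m + 1 := by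
    have h := hagree (z - y - 3) (by omega)
    rw [show y - 1 - (z - y - 3) = 2 * y + 2 - z by omega,
      show y + 2 + (z - y - 3) = z - 1 by omega] at h
    rw [h]
    exact hR.left (by omega)
  obtain ⟨w, z', hG, hw, hz'⟩ := IsBlock.exists_of_forall_eq hd.mem (lo := y - 1 - J)
    (hi := 2 * y + 2 - z) (by omega) (by omega) fun k hk hk' => by
      have h := hmir (y - 1 - k) (by omega) (by omega)
      rwa [show y - 1 - (y - 1 - k) = k by omega] at h
  have hz'le : z' ≤ 2 * y + 2 - z := hG.le_of_ne (by omega) (by omega)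
  have hzx : 2 * y + 2 - z < x := by
    by_contra!
    have := h₁.le_of_ne this (by omega)
    omega
  have := (IH w z' x y hG h₁ (by omega) (by omega)).2
  omega

lemma false_of_short_left_of_long (hd : IsBivMinimizer p s n m d) (hP : 2 < (p : ℝ))
    (h₁ : IsBlock n m d x y) (h₂ : IsBlock n m d x' y') (hyx : y ≤ x') (hlong : y - x + 2 ≤ y' - x')
    (IH : BlocksBalancedBelow n m d (x' - y)) : False := by
  have hy'n := h₂.le_n
  have hdy : d y = m + 1 := h₁.right (by omega)
  have hyx' : y < x' := lt_of_le_of_ne hyx fun h => by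
    have := h₂.eq x' le_rfl (by omega)
    subst h
    omega
  have hdy1 : d (y + 1) = m := by
    by_contra hne
    have hE : IsBlock n m d (y + 1) (y + 1) :=
      ⟨le_rfl, by omega, fun k _ _ => by omega, fun _ => hdy,
        fun _ => hd.eq_add_one_of_ne (by omega) hne⟩
    have := (IH _ _ _ _ hE h₂ (by omega) (by omega)).1
    omega
  rcases forall_lt_or_exists_least_not (fun j => j < y ∧ d (y - 1 - j) = d (y + 2 + j))
    (x' - y + (y - x)) with hall | ⟨J, hJK, hmin, hJ⟩
  · exact hd.false_of_agree_past_long_block h₁ h₂ hyx' hlong IH hall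
  have hagree : ∀ j < J, d (y - 1 - j) = d (y + 2 + j) := fun j hj => (hmin j hj).2
  have hJn : y + 2 + J < n := by omega
  rcases lt_or_ge J y with hJy | hJy
  · have hne : d (y - 1 - J) ≠ d (y + 2 + J) := fun h => hJ ⟨hJy, h⟩
    rcases hd.mem (y - 1 - J) (by omega) with hl | hl <;>
      rcases hd.mem (y + 2 + J) (by omega) with hr | hr
    · exact hne (hl.trans hr.symm)
    · refine hd.false_of_first_mismatch_at_separator h₁ h₂ hlong IH hJy ?_ hagree hl hr
      by_contra!
      have := h₂.eq _ (by omega) (by omega)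
      omega
    · exact hd.false_of_descent hP hdy hdy1 hJn hagree (.inr ⟨hJy, hl, hr⟩)
    · exact hne (hl.trans hr.symm)
  · have hJ : J = y := le_antisymm (not_lt.1 fun h => lt_irrefl _ (hmin y h).1) hJy
    exact hd.false_of_descent hP hdy hdy1 hJn hagree (.inl hJ)

theorem blocksBalancedBelow (hd : IsBivMinimizer p s n m d) (hP : 2 < (p : ℝ)) (μ : ℕ) :
    BlocksBalancedBelow n m d μ := by
  induction μ generalizing d with
  | zero => intro _ _ _ _ _ _ _ h; omega
  | succ μ ih =>
    intro x y x' y' h₁ h₂ hyx hμ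
    have := h₁.le
    have := h₂.le
    have := h₂.le_n
    constructor
    · by_contra! hlong
      exact hd.false_of_short_left_of_long hP h₁ h₂ hyx (by omega)
        fun a b c e g g' h hlt => ih hd a b c e g g' h (by omega)
    · by_contra! hlong
      exact hd.reverse.false_of_short_left_of_long hP h₂.reverse h₁.reverse (by omega) (by omega)
        fun a b c e g g' h hlt => ih hd.reverse a b c e g g' h (by omega)

theorem block_length_le (hd : IsBivMinimizer p s n m d) (hP : 2 < (p : ℝ))
    (h₁ : IsBlock n m d x y) (h₂ : IsBlock n m d x' y') : y' - x' ≤ y - x + 1 := by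
  rcases lt_trichotomy x x' with h | rfl | h
  · exact (hd.blocksBalancedBelow hP _ x y x' y' h₁ h₂ (h₁.le_of_lt h₂ h) (lt_add_one _)).1
  · have : y' ≤ y := by
      rcases h₁.le_n.lt_or_eq with hy | rfl
      · exact h₂.le_of_ne h₁.le (by rw [h₁.right hy]; omega)
      · exact h₂.le_n
    omega
  · exact (hd.blocksBalancedBelow hP _ x' y' x y h₂ h₁ (h₂.le_of_lt h₁ h) (lt_add_one _)).2

end IsBivMinimizer

lemma exists_adjacent_eq_of_two_mul_excess_lt {n : ℕ} {m : ℤ} {d : ℕ → ℤ}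
    (hmem : ∀ j < n, d j = m ∨ d j = m + 1) {i : ℕ} (hi : i + 1 < n) (hdi : d i = m + 1)
    (hdi' : d (i + 1) = m + 1) (hexcess : 2 * (∑ j ∈ range n, d j - n * m) < n) :
    ∃ j, j + 1 < n ∧ d j = m ∧ d (j + 1) = m := by
  by_contra! h
  obtain ⟨k, rfl⟩ : ∃ k, n = k + 1 := ⟨n - 1, by omega⟩
  have hpair : ∀ j ∈ range k, 2 * m + 1 + (if j = i then 1 else 0) ≤ d j + d (j + 1) := by
    intro j hj
    have hj : j < k := mem_range.1 hj
    have := h j (by omega)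
    split_ifs with hji
    · subst hji; omega
    · rcases hmem j (by omega) with h₁ | h₁ <;> rcases hmem (j + 1) (by omega) with h₂ | h₂ <;>
        omega
  have hlow := sum_le_sum hpair
  simp only [sum_add_distrib, sum_const, card_range, nsmul_eq_mul, mul_one, sum_ite_eq',
    mem_range, if_pos (by omega : i < k)] at hlow
  have h0 : m ≤ d 0 := by rcases hmem 0 (by omega) with h | h <;> omega
  have hk : m ≤ d k := by rcases hmem k (by omega) with h | h <;> omega
  have := sum_range_succ d k
  have := sum_range_succ' d k
  push_cast at hexcess
  linarith

namespace IsBivMinimizer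

variable {p s n : ℕ} {m : ℤ} {d : ℕ → ℤ}

lemma eq_one_of_isMaxRun (hd : IsBivMinimizer p s n m d) (hP : 2 < (p : ℝ))
    (hexcess : 2 * (∑ j ∈ range n, d j - n * m) < n) {i l : ℕ}
    (hrun : IsMaxRun n d (m + 1) i l) : l = 1 := by
  obtain ⟨hl, hin, hval, -, -⟩ := hrun
  by_contra hl1
  have hdi : d i = m + 1 := by simpa using hval 0 (by omega)
  have hdi' : d (i + 1) = m + 1 := hval 1 (by omega)
  obtain ⟨j, hj, hdj, hdj'⟩ :=
    exists_adjacent_eq_of_two_mul_excess_lt hd.mem (by omega) hdi hdi' hexcess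
  obtain ⟨w, z, hG, hw, hz⟩ := IsBlock.exists_of_forall_eq hd.mem (lo := j) (hi := j + 2)
    (by omega) (by omega) fun k hk hk' => by
      rcases (by omega : k = j ∨ k = j + 1) with rfl | rfl <;> assumption
  have hE : IsBlock n m d (i + 1) (i + 1) :=
    ⟨le_rfl, by omega, fun k _ _ => by omega, fun _ => hdi, fun _ => hdi'⟩
  have := hd.block_length_le hP hE hG
  omega

end IsBivMinimizer

theorem stmt14_general (p s r : ℕ) (hp3 : 3 ≤ p) (hr : 3 ≤ r) (hrs : r < s)
    (g : ℕ) (hgdef : g = (s - 1) % (r - 1)) (hg : 2 * g ≤ r - 2)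
    (fq : ℤ) (hfq : fq = (((s - 1) / (r - 1) : ℕ) : ℤ))
    (d : ℕ → ℤ)
    (hmem : ∀ j < r - 1, d j = fq ∨ d j = fq + 1)
    (hsum : ∑ j ∈ Finset.range (r - 1), d j = (s : ℤ) - 1)
    (hmin : ∀ b : ℕ → ℤ, Admissible s r b → hp p r (deltaInv d) ≤ hp p r b) :
    (∀ i l, IsMaxRun (r - 1) d (fq + 1) i l → l = 1) ∧
    (∀ i l i' l', IsMaxRun (r - 1) d fq i l → IsMaxRun (r - 1) d fq i' l' →
      l ≤ l' + 1) := by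
  obtain ⟨n, rfl⟩ : ∃ n, r = n + 1 := ⟨r - 1, by omega⟩
  simp only [Nat.add_sub_cancel] at hgdef hfq hmem hsum ⊢
  have hP : 2 < (p : ℝ) := by exact_mod_cast hp3
  have hd : IsBivMinimizer p s n fq d :=
    ⟨by rw [hfq]; exact_mod_cast Nat.div_pos (by omega) (by omega), hmem, hsum, hmin⟩
  have hexcess : 2 * (∑ j ∈ range n, d j - n * fq) < n := by
    have hdiv : ((n * ((s - 1) / n) + g : ℕ) : ℤ) = ((s - 1 : ℕ) : ℤ) := by
      rw [hgdef, Nat.div_add_mod]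
    rw [Nat.cast_add, Nat.cast_mul, Nat.cast_sub (by omega), Nat.cast_one] at hdiv
    rw [hsum, hfq]
    omega
  refine ⟨fun i l => hd.eq_one_of_isMaxRun hP hexcess, fun i l i' l' h h' => ?_⟩
  have := hd.block_length_le hP (IsBlock.of_isMaxRun hmem h') (IsBlock.of_isMaxRun hmem h)
  omega

/-- Proposition 5.2(ii): if `(r-1) ∤ (s-1)`, `g ≡ s-1 mod (r-1)` is the least positive
residue, `d ∈ Biv*(s,r)` (entries in `{[q], [q]+1}`, summing to `s-1`, first and last
entries `[q]`) with `h_p(δ⁻¹(d)) = min h_p`, and `2g ≤ r-2`, then `θ_max(d) = 1` (every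
maximal `[q]+1`-block of `d` is a singleton) and `η(d) = η_max(d) - η_min(d) ≤ 1` (the
lengths of any two maximal `[q]`-blocks differ by at most 1). -/
theorem stmt14 (p s r : ℕ) (hpp : p.Prime) (hp3 : 3 ≤ p) (hr : 3 ≤ r) (hrs : r < s)
    (hndvd1 : ¬ (r - 1) ∣ (s - 1))
    (g : ℕ) (hgdef : g = (s - 1) % (r - 1)) (hg : 2 * g ≤ r - 2)
    (fq : ℤ) (hfq : fq = (((s - 1) / (r - 1) : ℕ) : ℤ))
    (d : ℕ → ℤ)
    (hmem : ∀ j < r - 1, d j = fq ∨ d j = fq + 1)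
    (hsum : ∑ j ∈ Finset.range (r - 1), d j = (s : ℤ) - 1)
    (hframe : d 0 = fq ∧ d (r - 2) = fq)
    (hmin : ∀ b : ℕ → ℤ, Admissible s r b → hp p r (deltaInv d) ≤ hp p r b) :
    (∀ i l, IsMaxRun (r - 1) d (fq + 1) i l → l = 1) ∧
    (∀ i l i' l', IsMaxRun (r - 1) d fq i l → IsMaxRun (r - 1) d fq i' l' →
      l ≤ l' + 1) :=
  stmt14_general p s r hp3 hr hrs g hgdef hg fq hfq d hmem hsum hmin
end
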